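/- Let X be a finite connected simple graph. Then γ(X) is unicyclic (connected with exactly as many edges as vertices) if and only if X is a tree whose maximum degree is 3 and which has exactly one vertex of degree 3. -/

import Mathlib

open SimpleGraph Finset

/-- The symmetric edge graph `γ(X)` of a simple graph `X`: its vertices are the darts
(ordered pairs of adjacent vertices) of `X`, and two darts `(u,v)` and `(u',v')` are adjacent
iff (`v = u'` and `u ≠ v'`) or (`v' = u` and `u' ≠ v`). -/
def symEdgeGraph {V : Type*} (X : SimpleGraph V) : SimpleGraph X.Dart where
  Adj d d' := (d.snd = d'.fst ∧ d.fst ≠ d'.snd) ∨ (d'.snd = d.fst ∧ d'.fst ≠ d.snd)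
  symm := ⟨fun d d' h => Or.symm h⟩
  loopless := by
    refine ⟨?_⟩
    rintro d (⟨h1, -⟩ | ⟨h1, -⟩) <;> exact X.loopless.irrefl d.fst (h1 ▸ d.adj)

section AuxConn

variable {V : Type*} [Fintype V]

lemma exists_smaller_conn (G : SimpleGraph V) [Fintype G.edgeSet]
    (hconn : G.Connected) (hac : ¬ G.IsAcyclic) :
    ∃ (G' : SimpleGraph V), ∃ _inst : Fintype G'.edgeSet,
      G'.Connected ∧ G'.edgeFinset.card + 1 = G.edgeFinset.card := by
  classical
  rw [SimpleGraph.isAcyclic_iff_forall_adj_isBridge] at hac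
  push_neg at hac
  obtain ⟨u, v, huv, hnb⟩ := hac
  set G' := G \ SimpleGraph.fromEdgeSet {s(u, v)} with hG'
  have hreach : G'.Reachable u v := by
    by_contra h
    exact hnb (SimpleGraph.isBridge_iff.mpr h)
  have hedge : G'.edgeSet = G.edgeSet \ {s(u, v)} := by
    rw [hG', SimpleGraph.edgeSet_sdiff, SimpleGraph.edgeSet_fromEdgeSet,
      SimpleGraph.edgeSet_sdiff_sdiff_isDiag]
  haveI hinst : Fintype G'.edgeSet := Fintype.ofFinite _
  have hkey : ∀ {a b : V}, G.Adj a b → G'.Reachable a b := by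
    intro a b hab
    by_cases he : s(a, b) = s(u, v)
    · rcases Sym2.eq_iff.mp he with ⟨rfl, rfl⟩ | ⟨rfl, rfl⟩
      · exact hreach
      · exact hreach.symm
    · refine SimpleGraph.Adj.reachable ?_
      rw [hG', SimpleGraph.sdiff_adj, SimpleGraph.fromEdgeSet_adj]
      exact ⟨hab, fun h => he h.1⟩
  have hconn' : G'.Connected := by
    rw [SimpleGraph.connected_iff] at hconn ⊢
    refine ⟨fun a b => ?_, hconn.2⟩
    obtain ⟨p⟩ := hconn.1 a b
    induction p with
    | nil => exact SimpleGraph.Reachable.refl _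
    | cons h q ihp => exact (hkey h).trans ihp
  have hmem : s(u, v) ∈ G.edgeFinset := SimpleGraph.mem_edgeFinset.mpr huv
  have hEF : G'.edgeFinset = G.edgeFinset.erase s(u, v) := by
    ext e
    simp only [SimpleGraph.mem_edgeFinset, hedge, Set.mem_diff, Set.mem_singleton_iff,
      Finset.mem_erase]
    tauto
  refine ⟨G', hinst, hconn', ?_⟩
  rw [hEF, Finset.card_erase_add_one hmem]

lemma aux_card_le_edge : ∀ (n : ℕ) (G : SimpleGraph V) [Fintype G.edgeSet],
    G.Connected → G.edgeFinset.card = n → Fintype.card V ≤ n + 1 := by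
  intro n
  induction n using Nat.strong_induction_on with
  | _ n ih =>
    intro G _ hconn hcard
    by_cases hac : G.IsAcyclic
    · have := SimpleGraph.IsTree.card_edgeFinset ⟨hconn, hac⟩
      omega
    · obtain ⟨G', hinst, hconn', hcard'⟩ := exists_smaller_conn G hconn hac
      have hlt : G'.edgeFinset.card < n := by omega
      have := ih G'.edgeFinset.card hlt G' hconn' rfl
      omega

lemma isTree_of_card (G : SimpleGraph V) [Fintype G.edgeSet] (hconn : G.Connected)
    (hcard : G.edgeFinset.card + 1 = Fintype.card V) : G.IsTree := by
  refine ⟨hconn, ?_⟩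
  by_contra hac
  obtain ⟨G', hinst, hconn', hcard'⟩ := exists_smaller_conn G hconn hac
  have := aux_card_le_edge G'.edgeFinset.card G' hconn' rfl
  omega

end AuxConn

section Main

set_option linter.unusedSectionVars false

variable {V : Type*} [Fintype V] [DecidableEq V] (X : SimpleGraph V) [DecidableRel X.Adj]

lemma symEdge_adj (d d' : X.Dart) : (symEdgeGraph X).Adj d d' ↔
    (d.snd = d'.fst ∧ d.fst ≠ d'.snd) ∨ (d'.snd = d.fst ∧ d'.fst ≠ d.snd) := Iff.rfl

instance : DecidableRel (symEdgeGraph X).Adj := fun d d' =>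
  decidable_of_iff _ (symEdge_adj X d d').symm

lemma symEdge_degree (d : X.Dart) :
    (symEdgeGraph X).degree d + 2 = X.degree d.fst + X.degree d.snd := by
  rw [SimpleGraph.degree, SimpleGraph.neighborFinset_eq_filter]
  have hsplit : (univ.filter ((symEdgeGraph X).Adj d)) =
      (univ.filter (fun d' : X.Dart => d'.fst = d.snd)).erase d.symm ∪
      (univ.filter (fun d' : X.Dart => d'.snd = d.fst)).erase d.symm := by
    ext d'
    simp only [Finset.mem_union, Finset.mem_erase, Finset.mem_filter, Finset.mem_univ,
      true_and, symEdge_adj]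
    constructor
    · rintro (⟨h1, h2⟩ | ⟨h1, h2⟩)
      · refine Or.inl ⟨?_, h1.symm⟩
        intro he
        apply h2
        rw [he]
        rfl
      · refine Or.inr ⟨?_, h1⟩
        intro he
        apply h2
        rw [he]
        rfl
    · rintro (⟨h1, h2⟩ | ⟨h1, h2⟩)
      · refine Or.inl ⟨h2.symm, fun he => h1 ?_⟩
        exact SimpleGraph.Dart.ext _ _ (Prod.ext h2 he.symm)
      · refine Or.inr ⟨h2, fun he => h1 ?_⟩
        exact SimpleGraph.Dart.ext _ _ (Prod.ext he h2)
  have hdisj : Disjoint ((univ.filter (fun d' : X.Dart => d'.fst = d.snd)).erase d.symm)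
      ((univ.filter (fun d' : X.Dart => d'.snd = d.fst)).erase d.symm) := by
    rw [Finset.disjoint_left]
    intro d' hm hm'
    rw [Finset.mem_erase, Finset.mem_filter] at hm hm'
    exact hm.1 (SimpleGraph.Dart.ext _ _ (Prod.ext hm.2.2 hm'.2.2))
  have hmem1 : d.symm ∈ (univ.filter (fun d' : X.Dart => d'.fst = d.snd)) := by
    simp [SimpleGraph.Dart.symm]
  have hmem2 : d.symm ∈ (univ.filter (fun d' : X.Dart => d'.snd = d.fst)) := by
    simp [SimpleGraph.Dart.symm]
  rw [hsplit, Finset.card_union_of_disjoint hdisj]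
  have c1 : ((univ.filter (fun d' : X.Dart => d'.fst = d.snd)).erase d.symm).card + 1
      = X.degree d.snd := by
    rw [Finset.card_erase_add_one hmem1]
    exact X.dart_fst_fiber_card_eq_degree d.snd
  have c2 : ((univ.filter (fun d' : X.Dart => d'.snd = d.fst)).erase d.symm).card + 1
      = X.degree d.fst := by
    rw [Finset.card_erase_add_one hmem2]
    have := X.dart_fst_fiber_card_eq_degree d.fst
    rw [← this]
    apply Finset.card_bij (fun d' _ => SimpleGraph.Dart.symm d')
    · intro a ha
      simp only [Finset.mem_filter, Finset.mem_univ, true_and] at ha ⊢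
      exact ha
    · intro a ha b hb hab
      have := congrArg SimpleGraph.Dart.symm hab
      simpa using this
    · intro b hb
      refine ⟨b.symm, ?_, by simp⟩
      simp only [Finset.mem_filter, Finset.mem_univ, true_and] at hb ⊢
      exact hb
  omega

lemma sum_deg_fst : ∑ d : X.Dart, X.degree d.fst = ∑ v, X.degree v * X.degree v := by
  rw [← Finset.sum_fiberwise univ (fun d : X.Dart => d.fst) (fun d => X.degree d.fst)]
  refine Finset.sum_congr rfl fun v _ => ?_
  rw [Finset.sum_congr rfl (fun d hd => ?_), Finset.sum_const, smul_eq_mul,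
    X.dart_fst_fiber_card_eq_degree v]
  · simp only [Finset.mem_filter] at hd
    rw [hd.2]

lemma sum_deg_snd : ∑ d : X.Dart, X.degree d.snd = ∑ v, X.degree v * X.degree v := by
  rw [← sum_deg_fst X]
  apply Fintype.sum_equiv (Function.Involutive.toPerm SimpleGraph.Dart.symm
    (fun d => SimpleGraph.Dart.symm_symm d))
  intro d
  rfl

lemma gamma_edge_count :
    (symEdgeGraph X).edgeFinset.card + ∑ v, X.degree v = ∑ v, X.degree v * X.degree v := by
  have h1 := SimpleGraph.sum_degrees_eq_twice_card_edges (symEdgeGraph X)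
  have h2 : ∑ d : X.Dart, ((symEdgeGraph X).degree d + 2)
      = ∑ d : X.Dart, (X.degree d.fst + X.degree d.snd) :=
    Finset.sum_congr rfl fun d _ => symEdge_degree X d
  rw [Finset.sum_add_distrib, Finset.sum_add_distrib, Finset.sum_const, smul_eq_mul, mul_comm,
    h1, sum_deg_fst, sum_deg_snd, Finset.card_univ] at h2
  have h3 := X.dart_card_eq_sum_degrees
  omega
lemma exists_closer (hconn : X.Connected) {v c : V} (h : v ≠ c) :
    ∃ w, X.Adj v w ∧ X.dist w c < X.dist v c := by
  obtain ⟨p, hp⟩ := (hconn v c).exists_walk_length_eq_dist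
  cases p with
  | nil => exact absurd rfl h
  | @cons _ x _ hadj q =>
    refine ⟨x, hadj, ?_⟩
    have h1 : X.dist x c ≤ q.length := SimpleGraph.dist_le q
    simp only [SimpleGraph.Walk.length_cons] at hp
    omega

lemma reach_head (hconn : X.Connected) {c : V} (hc : 3 ≤ X.degree c) (d : X.Dart) :
    ∃ d' : X.Dart, d'.snd = c ∧ (symEdgeGraph X).Reachable d d' := by
  suffices H : ∀ n (d : X.Dart), X.dist d.snd c = n →
      ∃ d' : X.Dart, d'.snd = c ∧ (symEdgeGraph X).Reachable d d' from H _ d rfl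
  intro n
  induction n using Nat.strong_induction_on with
  | _ n ih =>
    intro d hd
    by_cases hvc : d.snd = c
    · exact ⟨d, hvc, SimpleGraph.Reachable.refl d⟩
    · obtain ⟨w, hadj, hlt⟩ := exists_closer X hconn hvc
      by_cases hw : w = d.fst
      · subst hw
        by_cases hu : d.fst = c
        · have hq : ∃ q, X.Adj c q ∧ q ≠ d.snd := by
            have h2 : ((X.neighborFinset c).erase d.snd).Nonempty := by
              rw [← Finset.card_pos]
              have h3 := Finset.card_erase_lt_of_mem (s := X.neighborFinset c) (a := d.snd)
              have h4 : (X.neighborFinset c).card = X.degree c := rfl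
              have h5 := Finset.pred_card_le_card_erase
                (s := X.neighborFinset c) (a := d.snd)
              omega
            obtain ⟨q, hq⟩ := h2
            rw [Finset.mem_erase, SimpleGraph.mem_neighborFinset] at hq
            exact ⟨q, hq.2, hq.1⟩
          obtain ⟨q, hq, hqs⟩ := hq
          refine ⟨⟨(q, c), hq.symm⟩, rfl, SimpleGraph.Adj.reachable ?_⟩
          exact (symEdge_adj X _ _).mpr (Or.inr ⟨hu.symm, hqs⟩)
        · obtain ⟨q, hq, hql⟩ := exists_closer X hconn hu
          have hqs : q ≠ d.snd := by
            intro he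
            rw [he] at hql
            omega
          obtain ⟨d', hd', hr⟩ := ih (X.dist d.fst c) (by omega) ⟨(q, d.fst), hq.symm⟩ rfl
          refine ⟨d', hd', SimpleGraph.Reachable.trans (SimpleGraph.Adj.reachable ?_) hr⟩
          exact (symEdge_adj X _ _).mpr (Or.inr ⟨rfl, hqs⟩)
      · obtain ⟨d', hd', hr⟩ := ih (X.dist w c) (by omega) ⟨(d.snd, w), hadj⟩ rfl
        refine ⟨d', hd', SimpleGraph.Reachable.trans (SimpleGraph.Adj.reachable ?_) hr⟩
        exact (symEdge_adj X _ _).mpr (Or.inl ⟨rfl, fun he => hw he.symm⟩)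

lemma reach_center {c : V} (hc : 3 ≤ X.degree c) (d₁ d₂ : X.Dart)
    (h₁ : d₁.snd = c) (h₂ : d₂.snd = c) : (symEdgeGraph X).Reachable d₁ d₂ := by
  by_cases h : d₁ = d₂
  · exact h ▸ SimpleGraph.Reachable.refl d₁
  · have hb : ∃ b', X.Adj c b' ∧ b' ≠ d₁.fst ∧ b' ≠ d₂.fst := by
      have h2 : ((X.neighborFinset c) \ {d₁.fst, d₂.fst}).Nonempty := by
        rw [← Finset.card_pos]
        have h3 := Finset.le_card_sdiff ({d₁.fst, d₂.fst} : Finset V) (X.neighborFinset c)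
        have h4 : ({d₁.fst, d₂.fst} : Finset V).card ≤ 2 :=
          (Finset.card_insert_le _ _).trans (by simp)
        have h5 : (X.neighborFinset c).card = X.degree c := rfl
        omega
      obtain ⟨b', hb'⟩ := h2
      rw [Finset.mem_sdiff, SimpleGraph.mem_neighborFinset] at hb'
      have := hb'.2
      simp only [Finset.mem_insert, Finset.mem_singleton, not_or] at this
      exact ⟨b', hb'.1, this.1, this.2⟩
    obtain ⟨b', hb', hb1, hb2⟩ := hb
    have r1 : (symEdgeGraph X).Adj d₁ ⟨(c, b'), hb'⟩ :=
      (symEdge_adj X _ _).mpr (Or.inl ⟨h₁, fun he => hb1 he.symm⟩)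
    have r2 : (symEdgeGraph X).Adj (⟨(c, b'), hb'⟩ : X.Dart) d₂ :=
      (symEdge_adj X _ _).mpr (Or.inr ⟨h₂, fun he => hb2 he.symm⟩)
    exact SimpleGraph.Reachable.trans r1.reachable r2.reachable

lemma gamma_connected (hconn : X.Connected) {c : V} (hc : 3 ≤ X.degree c) :
    (symEdgeGraph X).Connected := by
  have hne : Nonempty X.Dart := by
    have h0 : 0 < X.degree c := by omega
    rw [SimpleGraph.degree_pos_iff_exists_adj] at h0
    obtain ⟨w, hw⟩ := h0
    exact ⟨⟨(c, w), hw⟩⟩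
  rw [SimpleGraph.connected_iff]
  refine ⟨fun d d' => ?_, hne⟩
  obtain ⟨e, he, hr⟩ := reach_head X hconn hc d
  obtain ⟨e', he', hr'⟩ := reach_head X hconn hc d'
  exact (hr.trans (reach_center X hc e e' he he')).trans hr'.symm


/-- The forward step relation on darts. -/
def Fstep (d d' : X.Dart) : Prop := d.snd = d'.fst ∧ d.fst ≠ d'.snd

lemma Fstep_functional (hdeg : ∀ v, X.degree v ≤ 2) {d a b : X.Dart}
    (h1 : Fstep X d a) (h2 : Fstep X d b) : a = b := by
  have hsnd : a.snd = b.snd := by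
    by_contra hne
    have hmem : ({d.fst, a.snd, b.snd} : Finset V) ⊆ X.neighborFinset d.snd := by
      intro x hx
      simp only [Finset.mem_insert, Finset.mem_singleton] at hx
      rw [SimpleGraph.mem_neighborFinset]
      rcases hx with rfl | rfl | rfl
      · exact d.adj.symm
      · exact h1.1 ▸ a.adj
      · exact h2.1 ▸ b.adj
    have hcard : ({d.fst, a.snd, b.snd} : Finset V).card = 3 := by
      rw [Finset.card_insert_of_notMem, Finset.card_insert_of_notMem, Finset.card_singleton]
      · simp [hne]
      · simp only [Finset.mem_insert, Finset.mem_singleton, not_or]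
        exact ⟨fun he => h1.2 he, fun he => h2.2 he⟩
    have := Finset.card_le_card hmem
    have hd := hdeg d.snd
    rw [← SimpleGraph.card_neighborFinset_eq_degree] at hd
    omega
  exact SimpleGraph.Dart.ext _ _ (Prod.ext (h1.1.symm.trans h2.1) hsnd)

lemma Fstep_injective (hdeg : ∀ v, X.degree v ≤ 2) {d a b : X.Dart}
    (h1 : Fstep X a d) (h2 : Fstep X b d) : a = b := by
  have hfst : a.fst = b.fst := by
    by_contra hne
    have hmem : ({d.snd, a.fst, b.fst} : Finset V) ⊆ X.neighborFinset d.fst := by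
      intro x hx
      simp only [Finset.mem_insert, Finset.mem_singleton] at hx
      rw [SimpleGraph.mem_neighborFinset]
      rcases hx with rfl | rfl | rfl
      · exact d.adj
      · exact h1.1 ▸ a.adj.symm
      · exact h2.1 ▸ b.adj.symm
    have hcard : ({d.snd, a.fst, b.fst} : Finset V).card = 3 := by
      rw [Finset.card_insert_of_notMem, Finset.card_insert_of_notMem, Finset.card_singleton]
      · simp [hne]
      · simp only [Finset.mem_insert, Finset.mem_singleton, not_or]
        exact ⟨fun he => h1.2 he.symm, fun he => h2.2 he.symm⟩
    have := Finset.card_le_card hmem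
    have hd := hdeg d.fst
    rw [← SimpleGraph.card_neighborFinset_eq_degree] at hd
    omega
  exact SimpleGraph.Dart.ext _ _ (Prod.ext hfst (h1.1.trans h2.1.symm))

lemma reach_to_RTG (hdeg : ∀ v, X.degree v ≤ 2) {d e : X.Dart}
    (h : (symEdgeGraph X).Reachable d e) :
    Relation.ReflTransGen (Fstep X) d e ∨ Relation.ReflTransGen (Fstep X) e d := by
  obtain ⟨p⟩ := h
  induction p with
  | nil => exact Or.inl Relation.ReflTransGen.refl
  | @cons d d₁ e h q ihp =>
    rcases (symEdge_adj X d d₁).mp h with hF | hF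
    · rcases ihp with h1 | h1
      · exact Or.inl (Relation.ReflTransGen.head hF h1)
      · rcases h1.cases_tail with rfl | ⟨x, hex, hxd₁⟩
        · exact Or.inl (Relation.ReflTransGen.single hF)
        · rw [Fstep_injective X hdeg hxd₁ hF] at hex
          exact Or.inr hex
    · have hF : Fstep X d₁ d := hF
      rcases ihp with h1 | h1
      · rcases h1.cases_head with rfl | ⟨x, hd₁x, hxe⟩
        · exact Or.inr (Relation.ReflTransGen.single hF)
        · rw [Fstep_functional X hdeg hd₁x hF] at hxe
          exact Or.inl hxe
      · exact Or.inr (Relation.ReflTransGen.tail h1 hF)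

/-- `n`-step chains of forward steps. -/
def FChain : ℕ → X.Dart → X.Dart → Prop
  | 0, a, b => a = b
  | n + 1, a, b => ∃ c, FChain n a c ∧ Fstep X c b

lemma rtg_to_chain {a b : X.Dart} (h : Relation.ReflTransGen (Fstep X) a b) :
    ∃ n, FChain X n a b := by
  induction h with
  | refl => exact ⟨0, rfl⟩
  | tail _ hstep ih => exact ⟨ih.choose + 1, _, ih.choose_spec, hstep⟩

lemma chain_head : ∀ (n : ℕ) (a b : X.Dart), FChain X (n + 1) a b →
    ∃ c, Fstep X a c ∧ FChain X n c b := by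
  intro n
  induction n with
  | zero =>
    rintro a b ⟨c, rfl, h⟩
    exact ⟨b, h, rfl⟩
  | succ m ih =>
    rintro a b ⟨c, hc, hcb⟩
    obtain ⟨x, hax, hx⟩ := ih a c hc
    exact ⟨x, hax, c, hx, hcb⟩

lemma no_chain_symm (hdeg : ∀ v, X.degree v ≤ 2) :
    ∀ (n : ℕ) (d : X.Dart), ¬ FChain X n d d.symm := by
  intro n
  induction n using Nat.strong_induction_on with
  | _ n ih =>
    intro d h
    match n, h with
    | 0, h =>
      exact X.ne_of_adj d.adj (congrArg (fun e => e.toProd.1) h ▸ rfl)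
    | 1, ⟨c, hc, hstep⟩ =>
      rw [show c = d from hc.symm] at hstep
      exact hstep.2 rfl
    | (m + 2), ⟨c, hc, hstep⟩ =>
      obtain ⟨d₁, hd₁, hchain⟩ := chain_head X m d c hc
      have hF : Fstep X d₁.symm d.symm := by
        refine ⟨?_, ?_⟩
        · exact hd₁.1.symm
        · exact fun he => hd₁.2 he.symm
      have : c = d₁.symm := Fstep_injective X hdeg hstep hF
      rw [this] at hchain
      exact ih m (by omega) d₁ hchain

lemma exists_deg3 (hγ : (symEdgeGraph X).Connected) : ∃ c, 3 ≤ X.degree c := by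
  by_contra h
  push_neg at h
  have hdeg : ∀ v, X.degree v ≤ 2 := fun v => by have := h v; omega
  obtain ⟨d⟩ := hγ.nonempty
  have hr := hγ.preconnected d d.symm
  rcases reach_to_RTG X hdeg hr with h1 | h1
  · obtain ⟨n, hn⟩ := rtg_to_chain X h1
    exact no_chain_symm X hdeg n d hn
  · obtain ⟨n, hn⟩ := rtg_to_chain X h1
    rw [show d = d.symm.symm from (SimpleGraph.Dart.symm_symm d).symm] at hn
    exact no_chain_symm X hdeg n d.symm hn

lemma key_identity :
    ∑ v : V, ((X.degree v : ℤ) - 1) * ((X.degree v : ℤ) - 2)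
      = (∑ v : V, (X.degree v : ℤ) * (X.degree v : ℤ)) - 3 * (∑ v : V, (X.degree v : ℤ))
        + 2 * (Fintype.card V : ℤ) := by
  have h : ∀ v ∈ (univ : Finset V), ((X.degree v : ℤ) - 1) * ((X.degree v : ℤ) - 2)
      = (X.degree v : ℤ) * (X.degree v : ℤ) - 3 * (X.degree v : ℤ) + 2 := fun v _ => by ring
  rw [Finset.sum_congr rfl h, Finset.sum_add_distrib, Finset.sum_sub_distrib,
    ← Finset.mul_sum, Finset.sum_const, Finset.card_univ, nsmul_eq_mul,
    mul_comm ((Fintype.card V : ℤ)) 2]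

lemma int_fac_nonneg (k : ℤ) : 0 ≤ (k - 1) * (k - 2) := by
  rcases le_or_gt k 1 with h | h
  · nlinarith
  · nlinarith

lemma handshake_int :
    ∑ v : V, (X.degree v : ℤ) = 2 * (X.edgeFinset.card : ℤ) := by
  exact_mod_cast congrArg (Nat.cast : ℕ → ℤ) (X.sum_degrees_eq_twice_card_edges)

lemma degree_pos_of_conn (hconn : X.Connected) {v c : V} (hvc : v ≠ c) : 0 < X.degree v := by
  rw [SimpleGraph.degree_pos_iff_exists_adj]
  obtain ⟨p⟩ := hconn v c
  have hnil : ¬p.Nil := SimpleGraph.Walk.not_nil_of_ne hvc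
  exact ⟨p.getVert 1, p.adj_snd hnil⟩


end Main

/-- For a finite connected simple graph `X`, the symmetric edge graph `γ(X)` is unicyclic
(connected with as many edges as vertices) if and only if `X` is a tree whose maximum degree
is 3 and which has exactly one vertex of degree 3. -/
theorem symEdgeGraph_unicyclic_iff {V : Type*} [Fintype V] [DecidableEq V]
    (X : SimpleGraph V) [DecidableRel X.Adj] (hconn : X.Connected) :
    ((symEdgeGraph X).Connected ∧ (symEdgeGraph X).edgeSet.ncard = Nat.card X.Dart) ↔
      (X.IsTree ∧ (∀ v : V, X.degree v ≤ 3) ∧ (∃! v : V, X.degree v = 3)) := by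
  classical
  have hdartcard : Nat.card X.Dart = ∑ v, X.degree v := by
    rw [Nat.card_eq_fintype_card, X.dart_card_eq_sum_degrees]
  have hedgecard : (symEdgeGraph X).edgeSet.ncard = (symEdgeGraph X).edgeFinset.card := by
    rw [Set.ncard_eq_toFinset_card']
    congr 1
  have hcnt := gamma_edge_count X
  have hid := key_identity X
  have hhs := handshake_int X
  have hnonneg : ∀ v ∈ (univ : Finset V),
      (0 : ℤ) ≤ ((X.degree v : ℤ) - 1) * ((X.degree v : ℤ) - 2) :=
    fun v _ => int_fac_nonneg _
  constructor
  · rintro ⟨hγ, hcount⟩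
    -- the count condition in ℕ
    have hnat : ∑ v, X.degree v * X.degree v = 2 * ∑ v, X.degree v := by
      rw [hedgecard, hdartcard] at hcount
      omega
    have hZ : (∑ v : V, (X.degree v : ℤ) * (X.degree v : ℤ)) = 2 * ∑ v : V, (X.degree v : ℤ) := by
      exact_mod_cast congrArg (Nat.cast : ℕ → ℤ) hnat
    obtain ⟨c, hc⟩ := exists_deg3 X hγ
    have hcZ : (3 : ℤ) ≤ (X.degree c : ℤ) := by exact_mod_cast hc
    have hub := aux_card_le_edge X.edgeFinset.card X hconn rfl
    have hubZ : (Fintype.card V : ℤ) ≤ (X.edgeFinset.card : ℤ) + 1 := by exact_mod_cast hub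
    -- the sum equals 2 * card V - 2 * #edges
    have hsum : ∑ v : V, ((X.degree v : ℤ) - 1) * ((X.degree v : ℤ) - 2)
        = 2 * (Fintype.card V : ℤ) - 2 * (X.edgeFinset.card : ℤ) := by
      rw [hid, hZ, hhs]
      ring
    have hcterm : (2 : ℤ) ≤ ((X.degree c : ℤ) - 1) * ((X.degree c : ℤ) - 2) := by nlinarith
    have hle := Finset.single_le_sum hnonneg (Finset.mem_univ c)
    have hsum2 : ∑ v : V, ((X.degree v : ℤ) - 1) * ((X.degree v : ℤ) - 2) = 2 := by
      rw [hsum]; rw [hsum] at hle; linarith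
    have hEcard : X.edgeFinset.card + 1 = Fintype.card V := by
      rw [hsum2] at hsum
      have : (X.edgeFinset.card : ℤ) + 1 = (Fintype.card V : ℤ) := by linarith
      exact_mod_cast this
    have htree : X.IsTree := isTree_of_card X hconn hEcard
    -- degree bounds
    have hterm_le : ∀ v : V, ((X.degree v : ℤ) - 1) * ((X.degree v : ℤ) - 2) ≤ 2 := by
      intro v
      have := Finset.single_le_sum hnonneg (Finset.mem_univ v)
      rw [hsum2] at this
      exact this
    have hdegle : ∀ v : V, X.degree v ≤ 3 := by
      intro v
      by_contra hv
      have h4 : (4 : ℤ) ≤ (X.degree v : ℤ) := by exact_mod_cast (by omega : 4 ≤ X.degree v)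
      have := hterm_le v
      nlinarith
    have hc3 : X.degree c = 3 := le_antisymm (hdegle c) hc
    refine ⟨htree, hdegle, c, hc3, ?_⟩
    intro v hv
    by_contra hne
    have hvterm : ((X.degree v : ℤ) - 1) * ((X.degree v : ℤ) - 2) = 2 := by
      rw [hv]; norm_num
    have hcterm' : ((X.degree c : ℤ) - 1) * ((X.degree c : ℤ) - 2) = 2 := by
      rw [hc3]; norm_num
    have hpair : ∑ v ∈ ({v, c} : Finset V), ((X.degree v : ℤ) - 1) * ((X.degree v : ℤ) - 2)
        = 4 := by
      rw [Finset.sum_pair hne, hvterm, hcterm']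
      norm_num
    have hsub := Finset.sum_le_sum_of_subset_of_nonneg
      (f := fun w => ((X.degree w : ℤ) - 1) * ((X.degree w : ℤ) - 2))
      (Finset.subset_univ ({v, c} : Finset V)) (fun w hw _ => int_fac_nonneg _)
    rw [hpair, hsum2] at hsub
    norm_num at hsub
  · rintro ⟨htree, hdegle, c, hc3, huniq⟩
    have hcge : 3 ≤ X.degree c := hc3.ge
    refine ⟨gamma_connected X hconn hcge, ?_⟩
    have hEcard : X.edgeFinset.card + 1 = Fintype.card V := htree.card_edgeFinset
    -- compute the (d-1)(d-2) sum
    have hsum2 : ∑ v : V, ((X.degree v : ℤ) - 1) * ((X.degree v : ℤ) - 2) = 2 := by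
      rw [Finset.sum_eq_single_of_mem c (Finset.mem_univ c)]
      · rw [hc3]; norm_num
      · intro v _ hvc
        have h1 : 0 < X.degree v := degree_pos_of_conn X hconn hvc
        have h2 : X.degree v ≤ 3 := hdegle v
        have h3 : X.degree v ≠ 3 := fun h => hvc (huniq v h)
        have : X.degree v = 1 ∨ X.degree v = 2 := by omega
        rcases this with h | h <;> rw [h] <;> norm_num
    have hZ : (∑ v : V, (X.degree v : ℤ) * (X.degree v : ℤ)) = 2 * ∑ v : V, (X.degree v : ℤ) := by
      rw [hsum2] at hid
      have hn : (Fintype.card V : ℤ) = (X.edgeFinset.card : ℤ) + 1 := by exact_mod_cast hEcard.symm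
      rw [hhs] at hid ⊢
      rw [hn] at hid
      linarith
    have hnat : ∑ v, X.degree v * X.degree v = 2 * ∑ v, X.degree v := by
      exact_mod_cast hZ
    rw [hedgecard, hdartcard]
    omega
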